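/- arXiv:math/0609608 — 4 statements merged into one kernel-verified Lean document; each statement's English description precedes it below -/
import Mathlib

section
/- Let μ be a probability measure on M, let r ≥ 0 be real, let K ≥ 1 be a natural number, and set λ = (1 + r/K)^{−1} • (δ_1 + (r/K) • μ), a probability measure on M. Then for every measurable set X, λ^{*K}(X) ≤ (1 + r/K)^{−K} · e^{r} · e^{r(μ⋆−1)}(X). -/
open MeasureTheory

/-- n-fold convolution power, with `μ^{*0} = δ_1`. -/
noncomputable def mconvPow {M : Type*} [Monoid M] [MeasurableSpace M]
    (μ : Measure M) : ℕ → Measure M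
  | 0 => Measure.dirac 1
  | n + 1 => Measure.mconv (mconvPow μ n) μ

/-- The convolution exponential `e^{r(μ⋆−1)} = e^{−r} ∑ (r^n/n!) • μ^{*n}`. -/
noncomputable def convExp {M : Type*} [Monoid M] [MeasurableSpace M]
    (μ : Measure M) (r : ℝ) : Measure M :=
  ENNReal.ofReal (Real.exp (-r)) •
    Measure.sum fun n => ENNReal.ofReal (r ^ n / n.factorial) • mconvPow μ n

/-!
Expanding binomially, `(1 + r/K)^K λ^{*K} = ∑_{n ≤ K} C(K,n) (r/K)^n μ^{*n}`, while
`e^r e^{r(μ⋆−1)} = ∑_n (r^n/n!) μ^{*n}`. The claim therefore follows termwise from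
`C(K,n) (r/K)^n ≤ K^n/n! · r^n/K^n = r^n/n!`.
-/

open Finset
open scoped ENNReal

theorem Nat.choose_mul_ofReal_div_pow_le {r : ℝ} (hr : 0 ≤ r) (K n : ℕ) :
    K.choose n * ENNReal.ofReal (r / K) ^ n ≤ ENNReal.ofReal (r ^ n / n.factorial) := by
  rw [← ENNReal.ofReal_pow (by positivity), ← ENNReal.ofReal_natCast,
    ← ENNReal.ofReal_mul (by positivity)]
  refine ENNReal.ofReal_le_ofReal ?_
  rcases n.eq_zero_or_pos with rfl | hn
  · simp
  rcases K.eq_zero_or_pos with rfl | hK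
  · simp [Nat.choose_eq_zero_of_lt hn]; positivity
  calc (K.choose n : ℝ) * (r / K) ^ n
      ≤ ((K : ℝ) ^ n / n.factorial) * (r ^ n / (K : ℝ) ^ n) := by
        rw [div_pow]; gcongr; exact Nat.choose_le_pow_div n K
    _ = r ^ n / n.factorial := by field_simp

namespace MeasureTheory.Measure

variable {M : Type*} [Monoid M] [MeasurableSpace M]

theorem finset_sum_mconv [MeasurableMul₂ M] {ι : Type*} (s : Finset ι) (μ : ι → Measure M)
    [∀ i, IsFiniteMeasure (μ i)] (ν : Measure M) [SFinite ν] :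
    (∑ i ∈ s, μ i) ∗ₘ ν = ∑ i ∈ s, μ i ∗ₘ ν := by
  classical
  induction s using Finset.induction_on with
  | empty => simp [zero_mconv]
  | insert i s hi ih => rw [sum_insert hi, sum_insert hi, add_mconv, ih]

end MeasureTheory.Measure

section mconvPow

variable {M : Type*} [Monoid M] [MeasurableSpace M]

theorem mconvPow_zero (μ : Measure M) : mconvPow μ 0 = Measure.dirac 1 := rfl

theorem mconvPow_succ (μ : Measure M) (n : ℕ) : mconvPow μ (n + 1) = mconvPow μ n ∗ₘ μ := rfl

instance isFiniteMeasure_mconvPow (μ : Measure M) [IsFiniteMeasure μ] (n : ℕ) :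
    IsFiniteMeasure (mconvPow μ n) := by
  induction n with
  | zero => rw [mconvPow_zero]; infer_instance
  | succ n ih => rw [mconvPow_succ]; infer_instance

theorem mconvPow_smul (a : ℝ≥0∞) (μ : Measure M) [SFinite μ] (n : ℕ) :
    mconvPow (a • μ) n = a ^ n • mconvPow μ n := by
  induction n with
  | zero => simp [mconvPow_zero]
  | succ n ih =>
    rw [mconvPow_succ, mconvPow_succ, ih, Measure.mconv_smul_left, Measure.mconv_smul_right,
      smul_smul, pow_succ]

/-- No commutativity is needed: `δ₁` commutes with every measure. -/
theorem mconvPow_dirac_one_add [MeasurableMul₂ M] (ν : Measure M) [IsFiniteMeasure ν] (n : ℕ) :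
    mconvPow (Measure.dirac 1 + ν) n = ∑ k ∈ range (n + 1), n.choose k • mconvPow ν k := by
  induction n with
  | zero => simp [mconvPow_zero]
  | succ n ih =>
    rw [sum_choose_succ_nsmul (fun k _ => mconvPow ν k) n, mconvPow_succ, ih, Measure.mconv_add, Measure.mconv_dirac_one,
      Measure.finset_sum_mconv]
    congr 1
    refine sum_congr rfl fun k _ => ?_
    rw [← Nat.cast_smul_eq_nsmul ℝ≥0∞, Measure.mconv_smul_left, Nat.cast_smul_eq_nsmul,
      mconvPow_succ]

end mconvPow

theorem ofReal_exp_mul_convExp_apply {M : Type*} [Monoid M] [MeasurableSpace M]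
    (μ : Measure M) (r : ℝ) {X : Set M} (hX : MeasurableSet X) :
    ENNReal.ofReal (Real.exp r) * convExp μ r X =
      ∑' n, ENNReal.ofReal (r ^ n / n.factorial) * mconvPow μ n X := by
  have hexp : ENNReal.ofReal (Real.exp r) * ENNReal.ofReal (Real.exp (-r)) = 1 := by
    rw [← ENNReal.ofReal_mul (Real.exp_pos r).le, ← Real.exp_add, add_neg_cancel, Real.exp_zero,
      ENNReal.ofReal_one]
  simp only [convExp, Measure.smul_apply, Measure.sum_apply _ hX, smul_eq_mul, ← mul_assoc, hexp,
    one_mul]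

theorem stmt6_general {M : Type*} [CommMonoid M] [MeasurableSpace M] [MeasurableMul₂ M]
    (μ : Measure M) [IsProbabilityMeasure μ]
    (r : ℝ) (hr : 0 ≤ r) (K : ℕ) :
    ∀ X : Set M, MeasurableSet X →
      mconvPow ((ENNReal.ofReal (1 + r / K))⁻¹ •
          (Measure.dirac (1 : M) + ENNReal.ofReal (r / K) • μ)) K X ≤
        ENNReal.ofReal ((1 + r / K) ^ K)⁻¹ * ENNReal.ofReal (Real.exp r) *
          convExp μ r X := by
  intro X hX
  have : IsFiniteMeasure (ENNReal.ofReal (r / K) • μ) := ⟨by simp⟩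
  have hnorm : (ENNReal.ofReal (1 + r / K))⁻¹ ^ K = ENNReal.ofReal ((1 + r / K) ^ K)⁻¹ := by
    rw [← ENNReal.inv_pow, ← ENNReal.ofReal_pow (by positivity),
      ENNReal.ofReal_inv_of_pos (by positivity)]
  rw [mconvPow_smul, mconvPow_dirac_one_add, mul_assoc, ofReal_exp_mul_convExp_apply μ r hX,
    ← hnorm]
  simp only [mconvPow_smul, Measure.smul_apply, Measure.coe_finsetSum, Finset.sum_apply,
    smul_eq_mul, nsmul_eq_mul]
  gcongr
  calc ∑ k ∈ range (K + 1), K.choose k * (ENNReal.ofReal (r / K) ^ k * mconvPow μ k X)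
      ≤ ∑ k ∈ range (K + 1), ENNReal.ofReal (r ^ k / k.factorial) * mconvPow μ k X := by
        refine sum_le_sum fun k _ => ?_
        rw [← mul_assoc]
        gcongr ?_ * _
        exact Nat.choose_mul_ofReal_div_pow_le hr K k
    _ ≤ _ := ENNReal.sum_le_tsum _

theorem stmt6 {M : Type*} [CommMonoid M] [MeasurableSpace M] [MeasurableMul₂ M]
    (μ : Measure M) [IsProbabilityMeasure μ]
    (r : ℝ) (hr : 0 ≤ r) (K : ℕ) (hK : 1 ≤ K) :
    ∀ X : Set M, MeasurableSet X →
      mconvPow ((ENNReal.ofReal (1 + r / K))⁻¹ •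
          (Measure.dirac (1 : M) + ENNReal.ofReal (r / K) • μ)) K X ≤
        ENNReal.ofReal ((1 + r / K) ^ K)⁻¹ * ENNReal.ofReal (Real.exp r) *
          convExp μ r X :=
  stmt6_general μ r hr K
end

section
/- Let μ be a probability measure on M and r ≥ 0 a real number. For each natural number K ≥ 1 set λ_K = (1 + r/K)^{−1} • (δ_1 + (r/K) • μ). Then for every ε > 0 there exists K₀ such that for all K ≥ K₀ and every measurable set X, |λ_K^{*K}(X) − e^{r(μ⋆−1)}(X)| ≤ ε; that is, the binomial approximations λ_K^{*K} converge to the convolution exponential e^{r(μ⋆−1)} uniformly over measurable sets as K → ∞. -/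
open MeasureTheory

open Filter
open scoped ENNReal Topology

/-!
Write `λ_K = (1 - p_K) • δ₁ + p_K • μ` with `p_K = (r/K) / (1 + r/K)`. The binomial theorem for
convolution powers gives `λ_K^{*K} = ∑ₙ Bin(K, p_K)(n) • μ^{*n}`, while by definition
`e^{r(μ⋆−1)} = ∑ₙ Poi(r)(n) • μ^{*n}`. Both are mixtures of the probability measures `μ^{*n}`, so on
any set they differ by at most the `ℓ¹` distance between the weights. Since `K p_K → r`, the
binomial weights converge pointwise to the Poisson weights, and Scheffé's lemma upgrades this to
convergence in `ℓ¹`, uniformly in the set.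
-/

theorem tendsto_tsum_abs_sub_of_hasSum {α ι : Type*} {l : Filter α} {f : α → ι → ℝ} {g : ι → ℝ}
    {s : ℝ} (hf0 : ∀ a i, 0 ≤ f a i) (hg0 : ∀ i, 0 ≤ g i) (hf : ∀ a, HasSum (f a) s)
    (hg : HasSum g s) (hlim : ∀ i, Tendsto (fun a => f a i) l (𝓝 (g i))) :
    Tendsto (fun a => ∑' i, |f a i - g i|) l (𝓝 0) := by
  have hdef_le : ∀ a i, max (g i - f a i) 0 ≤ g i := fun a i =>
    max_le (by linarith [hf0 a i]) (hg0 i)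
  -- Scheffé: the two sums agree, so the `ℓ¹` distance is twice the deficit `∑ (g - f)⁺`.
  have hdist : ∀ a, ∑' i, |f a i - g i| = 2 * ∑' i, max (g i - f a i) 0 := fun a => by
    have hdef : Summable fun i => max (g i - f a i) 0 :=
      hg.summable.of_nonneg_of_le (fun i => le_max_right _ _) (hdef_le a)
    have hsplit : HasSum (fun i => (f a i - g i) + 2 * max (g i - f a i) 0)
        (0 + 2 * ∑' i, max (g i - f a i) 0) :=
      (sub_self s ▸ (hf a).sub hg).add (hdef.hasSum.mul_left 2)
    rw [zero_add] at hsplit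
    refine (hsplit.congr_fun fun i => ?_).tsum_eq
    rcases le_total (f a i) (g i) with h | h
    · rw [abs_of_nonpos (by linarith), max_eq_left (by linarith)]; ring
    · rw [abs_of_nonneg (by linarith), max_eq_right (by linarith)]; ring
  have hdeficit : Tendsto (fun a => ∑' i, max (g i - f a i) 0) l (𝓝 0) := by
    have := tendsto_tsum_of_dominated_convergence (𝓕 := l) (f := fun a i => max (g i - f a i) 0)
      (g := fun _ => 0) hg.summable
      (fun i => by
        simpa using ((tendsto_const_nhds (x := g i)).sub (hlim i)).max
          (tendsto_const_nhds (x := (0 : ℝ))))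
      (Eventually.of_forall fun a i => by
        rw [Real.norm_of_nonneg (le_max_right _ _)]; exact hdef_le a i)
    simpa using this
  simpa [hdist] using hdeficit.const_mul 2

theorem abs_tsum_mul_sub_tsum_mul_le {ι : Type*} {a b q : ι → ℝ} (ha : Summable a)
    (hb : Summable b) (hq : ∀ i, |q i| ≤ 1) :
    |∑' i, a i * q i - ∑' i, b i * q i| ≤ ∑' i, |a i - b i| := by
  have hle : ∀ (c : ι → ℝ) i, |c i * q i| ≤ |c i| := fun c i => by
    rw [abs_mul]; exact mul_le_of_le_one_right (abs_nonneg _) (hq i)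
  have hsum : ∀ c : ι → ℝ, Summable c → Summable fun i => c i * q i := fun c hc =>
    hc.abs.of_norm_bounded (hle c)
  calc |∑' i, a i * q i - ∑' i, b i * q i| = |∑' i, (a i - b i) * q i| := by
        rw [← (hsum a ha).tsum_sub (hsum b hb)]; simp only [sub_mul]
    _ ≤ ∑' i, |(a i - b i) * q i| := by
        simpa using norm_tsum_le_tsum_norm (hsum _ (ha.sub hb)).norm
    _ ≤ ∑' i, |a i - b i| :=
        (hsum _ (ha.sub hb)).abs.tsum_le_tsum (hle _) (ha.sub hb).abs

noncomputable def binomialWeight (K : ℕ) (p : ℝ) (n : ℕ) : ℝ :=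
  K.choose n * p ^ n * (1 - p) ^ (K - n)

noncomputable def poissonWeight (r : ℝ) (n : ℕ) : ℝ := Real.exp (-r) * r ^ n / n.factorial

theorem binomialWeight_nonneg {p : ℝ} (hp0 : 0 ≤ p) (hp1 : p ≤ 1) (K n : ℕ) :
    0 ≤ binomialWeight K p n := by
  have : 0 ≤ 1 - p := by linarith
  unfold binomialWeight; positivity

theorem hasSum_binomialWeight (K : ℕ) (p : ℝ) : HasSum (binomialWeight K p) 1 := by
  have hvanish : ∀ n ∉ Finset.range (K + 1), binomialWeight K p n = 0 := fun n hn => by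
    rw [binomialWeight, Nat.choose_eq_zero_of_lt (by simpa [Nat.lt_succ_iff] using hn)]
    simp
  have hbinom : ∑ n ∈ Finset.range (K + 1), binomialWeight K p n = 1 := by
    calc ∑ n ∈ Finset.range (K + 1), binomialWeight K p n = (p + (1 - p)) ^ K := by
          rw [add_pow]
          exact Finset.sum_congr rfl fun n _ => by rw [binomialWeight]; ring
      _ = 1 := by simp
  exact hbinom ▸ hasSum_sum_of_ne_finset_zero hvanish

theorem poissonWeight_nonneg {r : ℝ} (hr : 0 ≤ r) (n : ℕ) : 0 ≤ poissonWeight r n := by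
  unfold poissonWeight; positivity

theorem hasSum_poissonWeight (r : ℝ) : HasSum (poissonWeight r) 1 := by
  have := (NormedSpace.expSeries_div_hasSum_exp r).mul_left (Real.exp (-r))
  rw [← Real.exp_eq_exp_ℝ, ← Real.exp_add, neg_add_cancel, Real.exp_zero] at this
  exact this.congr_fun fun n => by rw [poissonWeight, mul_div_assoc]

theorem tendsto_natCast_mul_div_div_one_add_div (r : ℝ) :
    Tendsto (fun K : ℕ => K * (r / K / (1 + r / K))) atTop (𝓝 r) := by
  have hlim : Tendsto (fun K : ℕ => r / (1 + r / K)) atTop (𝓝 (r / (1 + 0))) :=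
    tendsto_const_nhds.div (tendsto_const_nhds.add (tendsto_const_div_atTop_nhds_zero_nat r))
      (by norm_num)
  rw [add_zero, div_one] at hlim
  refine hlim.congr' ?_
  filter_upwards [eventually_ne_atTop 0] with K hK
  field_simp

theorem choose_succ_mul_pow_mul_pow {R : Type*} [CommSemiring R] (a b : R) (K n : ℕ) :
    ((K + 1).choose (n + 1) : R) * b ^ (n + 1) * a ^ (K + 1 - (n + 1)) =
      a * ((K.choose (n + 1) : R) * b ^ (n + 1) * a ^ (K - (n + 1))) +
        b * ((K.choose n : R) * b ^ n * a ^ (K - n)) := by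
  rw [Nat.add_sub_add_right, Nat.choose_succ_succ', Nat.cast_add]
  rcases lt_or_ge n K with h | h
  · rw [show K - n = K - (n + 1) + 1 by omega]
    ring
  · rw [Nat.choose_eq_zero_of_lt (by omega : K < n + 1)]
    ring

theorem ENNReal.tsum_choose_succ_mul (a b : ℝ≥0∞) (m : ℕ → ℝ≥0∞) (K : ℕ) :
    ∑' n, ((K + 1).choose n : ℝ≥0∞) * b ^ n * a ^ (K + 1 - n) * m n =
      ∑' n, (K.choose n : ℝ≥0∞) * b ^ n * a ^ (K - n) * (a * m n + b * m (n + 1)) := by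
  set c : ℕ → ℝ≥0∞ := fun n => K.choose n * b ^ n * a ^ (K - n)
  calc ∑' n, ((K + 1).choose n : ℝ≥0∞) * b ^ n * a ^ (K + 1 - n) * m n
      = a * c 0 * m 0 + ∑' n, (a * c (n + 1) + b * c n) * m (n + 1) := by
        rw [tsum_eq_zero_add' ENNReal.summable]
        simp only [c, choose_succ_mul_pow_mul_pow]
        simp [pow_succ, mul_comm]
    _ = a * ∑' n, c n * m n + b * ∑' n, c n * m (n + 1) := by
        rw [tsum_eq_zero_add' (f := fun n => c n * m n) ENNReal.summable, mul_add,
          ← ENNReal.tsum_mul_left, ← ENNReal.tsum_mul_left, add_assoc, ← ENNReal.tsum_add,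
          mul_assoc]
        congr 2 with n
        ring
    _ = ∑' n, c n * (a * m n + b * m (n + 1)) := by
        rw [← ENNReal.tsum_mul_left, ← ENNReal.tsum_mul_left, ← ENNReal.tsum_add]
        congr 1 with n
        ring

namespace MeasureTheory.Measure

variable {α M : Type*} [MeasurableSpace α] [Monoid M] [MeasurableSpace M]

theorem toReal_sum_ofReal_smul_apply {ι : Type*} (ρ : ι → Measure α) [∀ i, IsFiniteMeasure (ρ i)]
    {w : ι → ℝ} (hw : ∀ i, 0 ≤ w i) {s : Set α} (hs : MeasurableSet s) :
    ((Measure.sum fun i => ENNReal.ofReal (w i) • ρ i) s).toReal = ∑' i, w i * (ρ i s).toReal := by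
  simp only [sum_apply _ hs, smul_apply, smul_eq_mul]
  rw [ENNReal.tsum_toReal_eq fun i => ENNReal.mul_ne_top ENNReal.ofReal_ne_top (measure_ne_top _ _)]
  simp only [ENNReal.toReal_mul, ENNReal.toReal_ofReal (hw _)]

theorem inv_ofReal_one_add_smul_add_smul {t : ℝ} (ht : 0 ≤ t) (ν μ : Measure α) :
    (ENNReal.ofReal (1 + t))⁻¹ • (ν + ENNReal.ofReal t • μ) =
      ENNReal.ofReal (1 - t / (1 + t)) • ν + ENNReal.ofReal (t / (1 + t)) • μ := by
  have ht1 : 0 < 1 + t := by linarith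
  rw [smul_add, smul_smul, show 1 - t / (1 + t) = (1 + t)⁻¹ by field_simp; ring,
    ENNReal.ofReal_inv_of_pos ht1, ENNReal.ofReal_div_of_pos ht1, ENNReal.div_eq_inv_mul]

theorem sum_mconv [MeasurableMul₂ M] {ι : Type*} (m : ι → Measure M) (ν : Measure M) [SFinite ν] :
    (Measure.sum m) ∗ₘ ν = Measure.sum fun i => m i ∗ₘ ν := by
  unfold mconv
  rw [prod_sum_left, map_sum measurable_mul.aemeasurable]

instance sFinite_mconvPow (μ : Measure M) [SFinite μ] (n : ℕ) : SFinite (mconvPow μ n) := by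
  induction n with
  | zero => unfold mconvPow; infer_instance
  | succ n ih => unfold mconvPow; infer_instance

instance isProbabilityMeasure_mconvPow [MeasurableMul₂ M] (μ : Measure M) [IsProbabilityMeasure μ]
    (n : ℕ) : IsProbabilityMeasure (mconvPow μ n) := by
  induction n with
  | zero => unfold mconvPow; infer_instance
  | succ n ih => unfold mconvPow; infer_instance

theorem mconvPow_smul_dirac_one_add_smul [MeasurableMul₂ M] (μ : Measure M) [SFinite μ]
    (a b : ℝ≥0∞) (K : ℕ) :
    mconvPow (a • dirac 1 + b • μ) K =
      Measure.sum fun n => ((K.choose n : ℝ≥0∞) * b ^ n * a ^ (K - n)) • mconvPow μ n := by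
  induction K with
  | zero =>
    ext s hs
    rw [sum_apply _ hs, tsum_eq_zero_add' ENNReal.summable]
    simp [mconvPow]
  | succ K ih =>
    have hconv : ∀ (c : ℝ≥0∞) (n : ℕ), (c • mconvPow μ n) ∗ₘ (a • dirac 1 + b • μ) =
        c • (a • mconvPow μ n + b • mconvPow μ (n + 1)) := fun c n => by
      rw [mconv_smul_left, mconv_add, mconv_smul_right, mconv_smul_right, mconv_dirac_one]
      rfl
    ext s hs
    rw [show mconvPow (a • dirac 1 + b • μ) (K + 1) = _ ∗ₘ _ from rfl, ih, sum_mconv,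
      sum_apply _ hs, sum_apply _ hs]
    simp only [hconv, smul_apply, add_apply, smul_eq_mul]
    exact (ENNReal.tsum_choose_succ_mul a b _ K).symm

theorem mconvPow_binomial [MeasurableMul₂ M] (μ : Measure M) [SFinite μ] {p : ℝ} (hp0 : 0 ≤ p)
    (hp1 : p ≤ 1) (K : ℕ) :
    mconvPow (ENNReal.ofReal (1 - p) • dirac 1 + ENNReal.ofReal p • μ) K =
      Measure.sum fun n => ENNReal.ofReal (binomialWeight K p n) • mconvPow μ n := by
  rw [mconvPow_smul_dirac_one_add_smul]
  congr with n : 2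
  rw [binomialWeight, ENNReal.ofReal_mul (by positivity), ENNReal.ofReal_mul (by positivity),
    ENNReal.ofReal_pow hp0, ENNReal.ofReal_pow (by linarith), ENNReal.ofReal_natCast]

theorem mconvPow_inv_ofReal_one_add_smul [MeasurableMul₂ M] (μ : Measure M) [SFinite μ] {t : ℝ}
    (ht : 0 ≤ t) (K : ℕ) :
    mconvPow ((ENNReal.ofReal (1 + t))⁻¹ • (dirac 1 + ENNReal.ofReal t • μ)) K =
      Measure.sum fun n => ENNReal.ofReal (binomialWeight K (t / (1 + t)) n) • mconvPow μ n := by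
  rw [inv_ofReal_one_add_smul_add_smul ht]
  exact mconvPow_binomial μ (by positivity) (div_le_one_of_le₀ (by linarith) (by linarith)) K

theorem convExp_eq_sum (μ : Measure M) (r : ℝ) :
    convExp μ r = Measure.sum fun n => ENNReal.ofReal (poissonWeight r n) • mconvPow μ n := by
  ext s hs
  simp only [convExp, smul_apply, sum_apply _ hs, smul_eq_mul, ← ENNReal.tsum_mul_left,
    ← mul_assoc, poissonWeight, mul_div_assoc, ENNReal.ofReal_mul (Real.exp_nonneg _)]

end MeasureTheory.Measure

theorem stmt7 {M : Type*} [CommMonoid M] [MeasurableSpace M] [MeasurableMul₂ M]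
    (μ : Measure M) [IsProbabilityMeasure μ] (r : ℝ) (hr : 0 ≤ r) :
    ∀ ε : ℝ, 0 < ε → ∃ K₀ : ℕ, ∀ K : ℕ, K₀ ≤ K → 1 ≤ K →
      ∀ X : Set M, MeasurableSet X →
        |(mconvPow ((ENNReal.ofReal (1 + r / K))⁻¹ •
              (Measure.dirac (1 : M) + ENNReal.ofReal (r / K) • μ)) K X).toReal -
            (convExp μ r X).toReal| ≤ ε := by
  intro ε hε
  set p : ℕ → ℝ := fun K => r / K / (1 + r / K)
  have hw : ∀ K n, 0 ≤ binomialWeight K (p K) n := fun K =>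
    have : 0 ≤ r / K := by positivity
    binomialWeight_nonneg (by positivity) (div_le_one_of_le₀ (by linarith) (by linarith)) K
  have hdist : Tendsto (fun K => ∑' n, |binomialWeight K (p K) n - poissonWeight r n|) atTop
      (𝓝 0) :=
    tendsto_tsum_abs_sub_of_hasSum hw (poissonWeight_nonneg hr)
      (fun K => hasSum_binomialWeight K (p K)) (hasSum_poissonWeight r) fun n =>
        ProbabilityTheory.tendsto_choose_mul_pow_of_tendsto_mul_atTop n
          (tendsto_natCast_mul_div_div_one_add_div r)
  obtain ⟨K₀, hK₀⟩ := eventually_atTop.1 (hdist.eventually (ge_mem_nhds hε))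
  refine ⟨K₀, fun K hK _ X hX => ?_⟩
  rw [Measure.mconvPow_inv_ofReal_one_add_smul μ (by positivity), Measure.convExp_eq_sum,
    Measure.toReal_sum_ofReal_smul_apply _ (hw K) hX,
    Measure.toReal_sum_ofReal_smul_apply _ (poissonWeight_nonneg hr) hX]
  refine (abs_tsum_mul_sub_tsum_mul_le (hasSum_binomialWeight K (p K)).summable
    (hasSum_poissonWeight r).summable fun n => ?_).trans (hK₀ K hK)
  rw [abs_of_nonneg ENNReal.toReal_nonneg]
  exact measureReal_le_one
end

section
/- Let μ be a probability measure on M and let r, s ≥ 0 be reals. Then the convolution exponentials satisfy e^{r(μ⋆−1)} ⋆ e^{s(μ⋆−1)} = e^{(r+s)(μ⋆−1)}. -/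
open MeasureTheory

/-!
The convolution powers of a single measure commute, `μ^{*i} ⋆ μ^{*j} = μ^{*(i+j)}`, so the
convolution of two series `∑ aₙ • μ^{*n}` and `∑ bₙ • μ^{*n}` is their Cauchy product
`∑ (∑_{i+j=n} aᵢ bⱼ) • μ^{*n}`. For the exponential coefficients the binomial theorem gives
`∑_{i+j=n} rⁱ/i! · sʲ/j! = (r+s)ⁿ/n!`, and `e^{-r} e^{-s} = e^{-(r+s)}`. The signs `r, s ≥ 0`
are what let `ENNReal.ofReal` commute with these sums and products.
-/

open scoped ENNReal Nat
open Finset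

theorem ENNReal.tsum_eq_tsum_sum_antidiagonal {A : Type*} [AddCommMonoid A] [HasAntidiagonal A]
    (f : A × A → ℝ≥0∞) : ∑' p, f p = ∑' n, ∑ p ∈ antidiagonal n, f p := by
  rw [← HasAntidiagonal.sigmaAntidiagonalEquivProd.tsum_eq, ENNReal.tsum_sigma']
  refine tsum_congr fun n => ?_
  rw [tsum_fintype]
  exact Finset.sum_coe_sort (antidiagonal n) f

theorem add_pow_div_factorial {K : Type*} [Field K] [CharZero K] (x y : K) (n : ℕ) :
    (x + y) ^ n / n ! = ∑ p ∈ antidiagonal n, x ^ p.1 / p.1 ! * (y ^ p.2 / p.2 !) := by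
  rw [(Commute.all x y).add_pow', Finset.sum_div]
  refine Finset.sum_congr rfl fun p hp => ?_
  obtain rfl := mem_antidiagonal.mp hp
  have hchoose : ((p.1 + p.2).choose p.1 : K) * p.1 ! * p.2 ! = (p.1 + p.2)! := by
    rw [Nat.choose_symm_add]
    exact_mod_cast Nat.add_choose_mul_factorial_mul_factorial p.1 p.2
  have hchoose_ne_zero : ((p.1 + p.2).choose p.1 : K) ≠ 0 :=
    Nat.cast_ne_zero.mpr (Nat.choose_pos (Nat.le_add_right _ _)).ne'
  rw [nsmul_eq_mul, ← hchoose]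
  field_simp

theorem ENNReal.ofReal_add_pow_div_factorial {x y : ℝ} (hx : 0 ≤ x) (hy : 0 ≤ y) (n : ℕ) :
    ENNReal.ofReal ((x + y) ^ n / n !) =
      ∑ p ∈ antidiagonal n,
        ENNReal.ofReal (x ^ p.1 / p.1 !) * ENNReal.ofReal (y ^ p.2 / p.2 !) := by
  rw [add_pow_div_factorial, ENNReal.ofReal_sum_of_nonneg fun p _ => by positivity]
  exact Finset.sum_congr rfl fun p _ => ENNReal.ofReal_mul (by positivity)

namespace MeasureTheory.Measure

theorem sum_eq_sum_sum_antidiagonal {α A : Type*} [MeasurableSpace α] [AddCommMonoid A]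
    [HasAntidiagonal A] (m : A × A → Measure α) :
    sum m = sum fun n => ∑ p ∈ antidiagonal n, m p := by
  ext s hs
  simp only [sum_apply _ hs, finsetSum_apply]
  exact ENNReal.tsum_eq_tsum_sum_antidiagonal _

theorem sum_mconv_sum {M ι ι' : Type*} [Monoid M] [MeasurableSpace M] [MeasurableMul₂ M]
    [Countable ι'] (m : ι → Measure M) (m' : ι' → Measure M) [∀ i, SFinite (m' i)] :
    sum m ∗ₘ sum m' = sum fun p : ι × ι' => m p.1 ∗ₘ m' p.2 := by
  unfold mconv
  rw [prod_sum, map_sum (by fun_prop : Measurable fun x : M × M => x.1 * x.2).aemeasurable]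

end MeasureTheory.Measure

section mconvPow

open Measure

variable {M : Type*} [Monoid M] [MeasurableSpace M] [MeasurableMul₂ M] (μ : Measure M) [SFinite μ]

instance sFinite_mconvPow (n : ℕ) : SFinite (mconvPow μ n) := by
  induction n with
  | zero => exact inferInstanceAs (SFinite (dirac 1))
  | succ n ih => exact inferInstanceAs (SFinite (mconvPow μ n ∗ₘ μ))

theorem mconvPow_add (m n : ℕ) : mconvPow μ (m + n) = mconvPow μ m ∗ₘ mconvPow μ n := by
  induction n with
  | zero => exact (mconv_dirac_one _).symm
  | succ n ih => rw [← add_assoc, mconvPow, mconvPow, ih, mconv_assoc]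

theorem sum_smul_mconvPow_mconv_sum_smul_mconvPow (a b : ℕ → ℝ≥0∞) :
    (sum fun n => a n • mconvPow μ n) ∗ₘ (sum fun n => b n • mconvPow μ n) =
      sum fun n => (∑ p ∈ antidiagonal n, a p.1 * b p.2) • mconvPow μ n := by
  rw [sum_mconv_sum, sum_eq_sum_sum_antidiagonal]
  refine sum_congr fun n => ?_
  rw [Finset.sum_smul]
  refine Finset.sum_congr rfl fun p hp => ?_
  rw [mconv_smul_left, mconv_smul_right, ← mconvPow_add, mem_antidiagonal.mp hp, smul_smul]

end mconvPow

theorem stmt10 {M : Type*} [CommMonoid M] [MeasurableSpace M] [MeasurableMul₂ M]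
    (μ : Measure M) [IsProbabilityMeasure μ]
    (r s : ℝ) (hr : 0 ≤ r) (hs : 0 ≤ s) :
    Measure.mconv (convExp μ r) (convExp μ s) = convExp μ (r + s) := by
  rw [convExp, convExp, convExp, Measure.mconv_smul_left, Measure.mconv_smul_right,
    sum_smul_mconvPow_mconv_sum_smul_mconvPow, smul_smul,
    ← ENNReal.ofReal_mul (Real.exp_nonneg _), ← Real.exp_add, neg_add]
  simp_rw [ENNReal.ofReal_add_pow_div_factorial hr hs]
end

section
/- Let μ be a probability measure on M, let r ≥ 0 be real, let K ≥ 1 be a natural number, and set λ = (1 + r/K)^{−1} • (δ_1 + (r/K) • μ). Then for every natural number L and every measurable set X, |λ^{*(K+L)}(X) − λ^{*K}(X)| ≤ 2·r·L/K. -/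
/-!
Convolving a probability measure `ν` with `λ` gives `(ν + t • ν ⋆ μ) / (1 + t)` with `t = r / K`,
which differs from `ν` by at most `t` on every set. Telescoping over the `L` steps from `λ^{*K}`
to `λ^{*(K+L)}` gives the bound `L r / K`.
-/

open MeasureTheory ENNReal

theorem abs_inv_one_add_mul_add_sub_le {t x y : ℝ} (ht : 0 ≤ t) (hx₀ : 0 ≤ x) (hx₁ : x ≤ 1)
    (hy₀ : 0 ≤ y) (hy₁ : y ≤ 1) :
    |(1 + t)⁻¹ * (x + t * y) - x| ≤ t := by
  have hpos : 0 < 1 + t := by linarith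
  have hxy : |y - x| ≤ 1 := abs_le.2 ⟨by linarith, by linarith⟩
  calc |(1 + t)⁻¹ * (x + t * y) - x| = t * |y - x| / (1 + t) := by
        rw [show (1 + t)⁻¹ * (x + t * y) - x = t * (y - x) / (1 + t) by field_simp; ring,
          abs_div, abs_mul, abs_of_nonneg ht, abs_of_pos hpos]
    _ ≤ t * 1 / 1 := by gcongr; linarith
    _ = t := by ring

theorem isProbabilityMeasure_mconvPow {M : Type*} [Monoid M] [MeasurableSpace M]
    [MeasurableMul₂ M] (μ : Measure M) [IsProbabilityMeasure μ] (n : ℕ) :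
    IsProbabilityMeasure (mconvPow μ n) := by
  induction n with
  | zero => exact Measure.dirac.isProbabilityMeasure
  | succ n ih => exact Measure.probabilitymeasure_of_probabilitymeasures_mconv _ _

namespace MeasureTheory.Measure

variable {M : Type*} [Monoid M] [MeasurableSpace M]

/-- `lazy μ (r / K)` is, by definition, the measure `λ` of the main theorem. -/
noncomputable def lazy (μ : Measure M) (t : ℝ) : Measure M :=
  (ENNReal.ofReal (1 + t))⁻¹ • (dirac 1 + ENNReal.ofReal t • μ)

theorem isProbabilityMeasure_lazy (μ : Measure M) [IsProbabilityMeasure μ] {t : ℝ}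
    (ht : 0 ≤ t) : IsProbabilityMeasure (lazy μ t) := by
  constructor
  have hne : ENNReal.ofReal (1 + t) ≠ 0 := by simp; linarith
  have hsum : 1 + ENNReal.ofReal t = ENNReal.ofReal (1 + t) := by
    rw [ENNReal.ofReal_add zero_le_one ht, ENNReal.ofReal_one]
  rw [lazy, smul_apply, add_apply, smul_apply, measure_univ, measure_univ, smul_eq_mul,
    smul_eq_mul, mul_one, hsum]
  exact ENNReal.inv_mul_cancel hne ofReal_ne_top

variable [MeasurableMul₂ M]

theorem mconv_lazy (ν μ : Measure M) [SFinite ν] [SFinite μ] (t : ℝ) :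
    ν ∗ₘ lazy μ t = (ENNReal.ofReal (1 + t))⁻¹ • (ν + ENNReal.ofReal t • ν ∗ₘ μ) := by
  rw [lazy, mconv_smul_right, mconv_add, mconv_smul_right, mconv_dirac_one]

theorem abs_real_mconv_lazy_sub_le (ν μ : Measure M) [IsProbabilityMeasure ν]
    [IsProbabilityMeasure μ] {t : ℝ} (ht : 0 ≤ t) (X : Set M) :
    |(ν ∗ₘ lazy μ t).real X - ν.real X| ≤ t := by
  rw [mconv_lazy, measureReal_ennreal_smul_apply,
    measureReal_add_apply (h₂ := mul_ne_top ofReal_ne_top (measure_ne_top _ X)),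
    measureReal_ennreal_smul_apply, toReal_inv, toReal_ofReal (by linarith), toReal_ofReal ht]
  exact abs_inv_one_add_mul_add_sub_le ht measureReal_nonneg measureReal_le_one
    measureReal_nonneg measureReal_le_one

theorem abs_real_mconvPow_lazy_add_sub_le (μ : Measure M) [IsProbabilityMeasure μ] {t : ℝ}
    (ht : 0 ≤ t) (X : Set M) (n L : ℕ) :
    |(mconvPow (lazy μ t) (n + L)).real X - (mconvPow (lazy μ t) n).real X| ≤ L * t := by
  have := isProbabilityMeasure_lazy μ ht
  have step : ∀ k, dist ((mconvPow (lazy μ t) k).real X)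
      ((mconvPow (lazy μ t) (k + 1)).real X) ≤ t := fun k => by
    have := isProbabilityMeasure_mconvPow (lazy μ t) k
    rw [Real.dist_eq, abs_sub_comm]
    exact abs_real_mconv_lazy_sub_le _ _ ht X
  have := dist_le_Ico_sum_of_dist_le (f := fun k => (mconvPow (lazy μ t) k).real X)
    (Nat.le_add_right n L) (d := fun _ => t) fun _ _ => step _
  rwa [Finset.sum_const, Nat.card_Ico, Nat.add_sub_cancel_left, nsmul_eq_mul, Real.dist_eq,
    abs_sub_comm] at this

end MeasureTheory.Measure

theorem stmt12_general {M : Type*} [CommMonoid M] [MeasurableSpace M] [MeasurableMul₂ M]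
    (μ : Measure M) [IsProbabilityMeasure μ]
    (r : ℝ) (hr : 0 ≤ r) (K : ℕ) (L : ℕ) :
    ∀ X : Set M, MeasurableSet X →
      |(mconvPow ((ENNReal.ofReal (1 + r / K))⁻¹ •
            (Measure.dirac (1 : M) + ENNReal.ofReal (r / K) • μ)) (K + L) X).toReal -
          (mconvPow ((ENNReal.ofReal (1 + r / K))⁻¹ •
            (Measure.dirac (1 : M) + ENNReal.ofReal (r / K) • μ)) K X).toReal| ≤
        2 * r * L / K := by
  intro X _
  have hrK : 0 ≤ r / K := by positivity
  calc _ ≤ L * (r / K) := Measure.abs_real_mconvPow_lazy_add_sub_le μ hrK X K L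
    _ = r * L / K := by ring
    _ ≤ 2 * r * L / K := by gcongr; linarith

theorem stmt12 {M : Type*} [CommMonoid M] [MeasurableSpace M] [MeasurableMul₂ M]
    (μ : Measure M) [IsProbabilityMeasure μ]
    (r : ℝ) (hr : 0 ≤ r) (K : ℕ) (hK : 1 ≤ K) (L : ℕ) :
    ∀ X : Set M, MeasurableSet X →
      |(mconvPow ((ENNReal.ofReal (1 + r / K))⁻¹ •
            (Measure.dirac (1 : M) + ENNReal.ofReal (r / K) • μ)) (K + L) X).toReal -
          (mconvPow ((ENNReal.ofReal (1 + r / K))⁻¹ •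
            (Measure.dirac (1 : M) + ENNReal.ofReal (r / K) • μ)) K X).toReal| ≤
        2 * r * L / K :=
  stmt12_general μ r hr K L
end
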